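/- arXiv:1806.09874 — 3 statements merged into one kernel-verified Lean document; each statement's English description precedes it below -/
import Mathlib

section
/- Let f = g/h be a meromorphic modular form of weight k for SL(2,ℤ) such that h(it) ≠ 0 for every t > 0, and suppose f is regular at the cusp: there exist T > 0 and c : ℕ → ℂ such that h(τ) ≠ 0 and f(τ) = Σ_{n≥0} c(n) e^{2πinτ} for all τ with Im τ > T. Then for every B > 0 and every s ∈ ℂ with Re(s) > max(k, 0), ∫₀^∞ t^{s−1}(f(it) − c(0)) dt = −c(0)·(B^s/s + i^k B^{s−k}/(k−s)) + ∫_B^∞ t^{s−1}(f(it) − c(0)) dt + i^k ∫_{1/B}^∞ t^{k−s−1}(f(it) − c(0)) dt, all three integrals converging absolutely. -/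
/-!
Write `φ t = f (t * I)`. The transformation laws of `g` and `h` give `φ (1/t) = (i t)^k φ t`, and
the `q`-expansion gives `‖φ t - c 0‖ ≤ C e^{-2πt}` for large `t`, so `t^r (φ t - c 0)` is
integrable on every `[b, ∞)` with `b > 0`, whatever `r`. On `(0, B]` substitute `t = 1/u`: the
integrand becomes `i^k u^{k-s-1} (φ u - c 0)` plus `c 0 (i^k u^{k-s-1} - u^{-s-1})`, and since
`Re s > max k 0` both powers are integrable on `(1/B, ∞)`; their integrals make up the polar term.
-/

open Complex Real Filter MeasureTheory Set

/-- A level-one holomorphic modular form of weight `k`: holomorphic on the upper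
half-plane, 1-periodic, with the weight-`k` transformation under `τ ↦ -1/τ`,
and bounded as `Im τ → ∞`. -/
def IsModularForm (k : ℤ) (f : ℂ → ℂ) : Prop :=
  DifferentiableOn ℂ f {z : ℂ | 0 < z.im} ∧
  (∀ z : ℂ, 0 < z.im → f (z + 1) = f z) ∧
  (∀ z : ℂ, 0 < z.im → f (-z⁻¹) = z ^ k * f z) ∧
  ∃ C A : ℝ, ∀ z : ℂ, A < z.im → ‖f z‖ ≤ C

theorem integrableOn_Ioi_cpow_mul_of_norm_le_exp {G : ℝ → ℂ} (hG : ContinuousOn G (Ioi 0))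
    {a C T₀ : ℝ} (ha : 0 < a) (hbound : ∀ t, T₀ ≤ t → ‖G t‖ ≤ C * Real.exp (-a * t))
    (r : ℂ) {b : ℝ} (hb : 0 < b) :
    IntegrableOn (fun t : ℝ => (t : ℂ) ^ r * G t) (Ioi b) := by
  have hloc : LocallyIntegrableOn (fun t : ℝ => (t : ℂ) ^ r * G t) (Ici b) := by
    refine ContinuousOn.locallyIntegrableOn (fun t ht => ?_) measurableSet_Ici
    have ht : 0 < t := hb.trans_le ht
    exact ((continuousAt_ofReal_cpow_const t r (Or.inr ht.ne')).continuousWithinAt).mul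
      ((hG t ht).mono fun _ hu => hb.trans_le hu)
  have hpow : (fun t : ℝ => (t : ℂ) ^ r) =O[atTop] fun t => t ^ r.re :=
    Asymptotics.IsBigO.of_bound 1 <| (eventually_gt_atTop 0).mono fun t ht => by
      rw [norm_cpow_eq_rpow_re_of_pos ht, one_mul, Real.norm_of_nonneg (by positivity)]
  have hG : G =O[atTop] fun t => Real.exp (-a * t) :=
    Asymptotics.IsBigO.of_bound C <| (eventually_ge_atTop T₀).mono fun t ht => by
      rw [Real.norm_of_nonneg (Real.exp_nonneg _)]; exact hbound t ht
  have hO : (fun t : ℝ => (t : ℂ) ^ r * G t) =O[atTop] fun t => Real.exp (-(a / 2) * t) := by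
    refine ((hpow.trans (isLittleO_rpow_exp_pos_mul_atTop r.re (half_pos ha)).isBigO).mul
      hG).congr_right fun t => ?_
    rw [← Real.exp_add]; ring_nf
  exact (hloc.integrableOn_of_isBigO_atTop hO
    ⟨Ioi 0, Ioi_mem_atTop 0, exp_neg_integrableOn_Ioi 0 (half_pos ha)⟩).mono_set
    Ioi_subset_Ici_self

theorem image_inv_Ioi_inv {B : ℝ} (hB : 0 < B) : Inv.inv '' Ioi B⁻¹ = Ioo 0 B := by
  ext x
  constructor
  · rintro ⟨u, hu, rfl⟩
    have hu0 : 0 < u := (inv_pos.2 hB).trans hu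
    exact ⟨inv_pos.2 hu0, by simpa using (inv_lt_inv₀ hu0 (inv_pos.2 hB)).2 hu⟩
  · rintro ⟨hx0, hxB⟩
    exact ⟨x⁻¹, (inv_lt_inv₀ hB hx0).2 hxB, inv_inv x⟩

theorem integrableOn_Ioc_zero_iff_inv {G : ℝ → ℂ} {B : ℝ} (hB : 0 < B) :
    IntegrableOn G (Ioc 0 B) ↔ IntegrableOn (fun u : ℝ => (u ^ 2)⁻¹ • G u⁻¹) (Ioi B⁻¹) := by
  rw [integrableOn_Ioc_iff_integrableOn_Ioo, ← image_inv_Ioi_inv hB,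
    integrableOn_image_iff_integrableOn_abs_deriv_smul measurableSet_Ioi
      (fun x hx => (hasDerivAt_inv ((inv_pos.2 hB).trans hx).ne').hasDerivWithinAt)
      inv_injective.injOn G]
  simp only [abs_neg, abs_inv, abs_sq]

theorem integral_Ioc_zero_eq_integral_Ioi_inv (G : ℝ → ℂ) {B : ℝ} (hB : 0 < B) :
    ∫ t in Ioc 0 B, G t = ∫ u in Ioi B⁻¹, (u ^ 2)⁻¹ • G u⁻¹ := by
  rw [integral_Ioc_eq_integral_Ioo, ← image_inv_Ioi_inv hB,
    integral_image_eq_integral_abs_deriv_smul measurableSet_Ioi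
      (fun x hx => (hasDerivAt_inv ((inv_pos.2 hB).trans hx).ne').hasDerivWithinAt)
      inv_injective.injOn G]
  simp only [abs_neg, abs_inv, abs_sq]

theorem integrableOn_Ioi_inv_cpow_sub_one {r : ℂ} (hr : r.re < 0) {B : ℝ} (hB : 0 < B) :
    IntegrableOn (fun u : ℝ => (u : ℂ) ^ (r - 1)) (Ioi B⁻¹) :=
  integrableOn_Ioi_cpow_of_lt (by simp only [sub_re, one_re]; linarith) (inv_pos.2 hB)

theorem integral_Ioi_inv_cpow_sub_one {r : ℂ} (hr : r.re < 0) {B : ℝ} (hB : 0 < B) :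
    ∫ u in Ioi B⁻¹, (u : ℂ) ^ (r - 1) = -(B : ℂ) ^ (-r) / r := by
  rw [integral_Ioi_cpow_of_lt (by simp only [sub_re, one_re]; linarith) (inv_pos.2 hB),
    sub_add_cancel, ofReal_inv, inv_cpow_ofReal_nonneg hB.le, ← cpow_neg]

theorem cexp_two_pi_I_mul_ofReal_mul_I (n : ℕ) (t : ℝ) :
    Complex.exp (2 * π * I * n * (t * I)) = ((Real.exp (-(2 * π) * t) : ℝ) : ℂ) ^ n := by
  rw [ofReal_exp, ← Complex.exp_nat_mul]
  congr 1
  push_cast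
  ring_nf
  rw [I_sq]
  ring

theorem exists_norm_sub_const_le_of_qExpansion {f : ℂ → ℂ} {c : ℕ → ℂ} {T : ℝ}
    (hq : ∀ τ : ℂ, T < τ.im →
      Summable (fun n : ℕ => ‖c n * Complex.exp (2 * π * I * n * τ)‖) ∧
      f τ = ∑' n : ℕ, c n * Complex.exp (2 * π * I * n * τ)) :
    ∃ C T₀ : ℝ, ∀ t, T₀ ≤ t → ‖f (t * I) - c 0‖ ≤ C * Real.exp (-(2 * π) * t) := by
  set q : ℝ → ℝ := fun t => Real.exp (-(2 * π) * t)
  have hterm (n : ℕ) (t : ℝ) :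
      ‖c n * Complex.exp (2 * π * I * n * (t * I))‖ = ‖c n‖ * q t ^ n := by
    rw [norm_mul, cexp_two_pi_I_mul_ofReal_mul_I, norm_pow, norm_real,
      Real.norm_of_nonneg (Real.exp_nonneg _)]
  have him (t : ℝ) : ((t : ℂ) * I).im = t := by simp
  have hq₀ : Summable fun n => ‖c (n + 1)‖ * q (T + 1) ^ n := by
    have h := (summable_nat_add_iff 1).2 ((hq ((T + 1 : ℝ) * I) (by rw [him]; linarith)).1)
    simp only [hterm, pow_succ] at h
    simp only [← mul_assoc] at h
    exact (summable_mul_right_iff (Real.exp_pos (-(2 * π) * (T + 1))).ne').1 h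
  -- `f (t * I) - c 0 = q t * ∑ c (n + 1) (q t) ^ n`, and for `t ≥ T + 1` the series is dominated
  -- termwise by its majorant at `t = T + 1`.
  refine ⟨∑' n, ‖c (n + 1)‖ * q (T + 1) ^ n, T + 1, fun t ht => ?_⟩
  obtain ⟨hsum, hf⟩ := hq (t * I) (by rw [him]; linarith)
  have hqt : q t ≤ q (T + 1) := Real.exp_le_exp.2 (by nlinarith [Real.pi_pos])
  have hshift := (summable_nat_add_iff 1).2 hsum
  rw [hf, hsum.of_norm.tsum_eq_zero_add]
  simp only [CharP.cast_eq_zero, mul_zero, zero_mul, Complex.exp_zero, mul_one,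
    add_sub_cancel_left]
  calc ‖∑' n, c (n + 1) * Complex.exp (2 * π * I * (n + 1 : ℕ) * (t * I))‖
      ≤ ∑' n, ‖c (n + 1)‖ * q t ^ (n + 1) := by
        simpa only [hterm] using norm_tsum_le_tsum_norm hshift
    _ = q t * ∑' n, ‖c (n + 1)‖ * q t ^ n := by
        rw [← tsum_mul_left]; congr 1; ext n; ring
    _ ≤ q t * ∑' n, ‖c (n + 1)‖ * q (T + 1) ^ n := by
        refine mul_le_mul_of_nonneg_left (Summable.tsum_le_tsum (fun n => by gcongr) ?_ hq₀)
          (Real.exp_nonneg _)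
        exact hq₀.of_nonneg_of_le (fun n => by positivity) (fun n => by gcongr)
    _ = _ := mul_comm _ _

theorem neg_inv_ofReal_mul_I (t : ℝ) : -((t : ℂ) * I)⁻¹ = ((t⁻¹ : ℝ) : ℂ) * I := by
  rw [mul_inv, inv_I, ofReal_inv]; ring

theorem div_neg_inv_eq_zpow_sub_mul {k₁ k₂ : ℤ} {g h : ℂ → ℂ}
    (hg : ∀ z : ℂ, 0 < z.im → g (-z⁻¹) = z ^ k₁ * g z)
    (hh : ∀ z : ℂ, 0 < z.im → h (-z⁻¹) = z ^ k₂ * h z) {z : ℂ} (hz : 0 < z.im) :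
    g (-z⁻¹) / h (-z⁻¹) = z ^ (k₁ - k₂) * (g z / h z) := by
  have hz0 : z ≠ 0 := fun h0 => by simp [h0] at hz
  rw [hg z hz, hh z hz, mul_div_mul_comm, zpow_sub₀ hz0]

theorem continuousOn_comp_ofReal_mul_I {F : ℂ → ℂ} (hF : ContinuousOn F {z : ℂ | 0 < z.im}) :
    ContinuousOn (fun t : ℝ => F (t * I)) (Ioi 0) :=
  hF.comp (by fun_prop) fun t ht => by simpa using ht

theorem inv_sq_smul_cpow_inv_mul_sub_eq {φ : ℝ → ℂ} {k : ℤ}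
    (hinv : ∀ t : ℝ, 0 < t → φ t⁻¹ = ((t : ℂ) * I) ^ k * φ t) (a₀ s : ℂ) {u : ℝ} (hu : 0 < u) :
    (u ^ 2)⁻¹ • (((u⁻¹ : ℝ) : ℂ) ^ (s - 1) * (φ u⁻¹ - a₀))
      = I ^ k * ((u : ℂ) ^ ((k : ℂ) - s - 1) * (φ u - a₀))
        + a₀ * (I ^ k * (u : ℂ) ^ ((k : ℂ) - s - 1) - (u : ℂ) ^ (-s - 1)) := by
  have hu0 : (u : ℂ) ≠ 0 := ofReal_ne_zero.2 hu.ne'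
  have hsq : ((u : ℂ) ^ 2)⁻¹ = (u : ℂ) ^ (-2 : ℂ) := by
    rw [cpow_neg, ← cpow_natCast]; norm_num
  have e1 : (u : ℂ) ^ (-s - 1) = (u : ℂ) ^ (-2 : ℂ) * (u : ℂ) ^ (-(s - 1)) := by
    rw [← cpow_add _ _ hu0]; ring_nf
  have e2 : (u : ℂ) ^ ((k : ℂ) - s - 1)
      = (u : ℂ) ^ (-2 : ℂ) * (u : ℂ) ^ (-(s - 1)) * (u : ℂ) ^ (k : ℂ) := by
    rw [← cpow_add _ _ hu0, ← cpow_add _ _ hu0]; ring_nf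
  rw [hinv u hu, real_smul]
  push_cast
  rw [inv_cpow_ofReal_nonneg hu.le, ← cpow_neg, mul_zpow, ← cpow_intCast (u : ℂ) k, e1, e2, hsq]
  ring

theorem integrableOn_Ioc_zero_cpow_mul_sub_of_inv {φ : ℝ → ℂ} {k : ℤ}
    (hinv : ∀ t : ℝ, 0 < t → φ t⁻¹ = ((t : ℂ) * I) ^ k * φ t) (a₀ : ℂ) {s : ℂ}
    (hsk : (k : ℝ) < s.re) (hs : 0 < s.re) {B : ℝ} (hB : 0 < B)
    (htail : IntegrableOn (fun u : ℝ => (u : ℂ) ^ ((k : ℂ) - s - 1) * (φ u - a₀)) (Ioi B⁻¹)) :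
    IntegrableOn (fun t : ℝ => (t : ℂ) ^ (s - 1) * (φ t - a₀)) (Ioc 0 B) := by
  have hks : ((k : ℂ) - s).re < 0 := by simp only [sub_re, intCast_re]; linarith
  have hs' : (-s).re < 0 := by simp only [neg_re]; linarith
  have hpolar : IntegrableOn
      (fun u : ℝ => a₀ * (I ^ k * (u : ℂ) ^ ((k : ℂ) - s - 1) - (u : ℂ) ^ (-s - 1))) (Ioi B⁻¹) :=
    (((integrableOn_Ioi_inv_cpow_sub_one hks hB).const_mul _).sub
      (integrableOn_Ioi_inv_cpow_sub_one hs' hB)).const_mul a₀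
  rw [integrableOn_Ioc_zero_iff_inv hB]
  exact IntegrableOn.congr_fun ((htail.const_mul (I ^ k)).add hpolar)
    (fun u hu => (inv_sq_smul_cpow_inv_mul_sub_eq hinv a₀ s ((inv_pos.2 hB).trans hu)).symm)
    measurableSet_Ioi

theorem integral_Ioc_zero_cpow_mul_sub_of_inv {φ : ℝ → ℂ} {k : ℤ}
    (hinv : ∀ t : ℝ, 0 < t → φ t⁻¹ = ((t : ℂ) * I) ^ k * φ t) (a₀ : ℂ) {s : ℂ}
    (hsk : (k : ℝ) < s.re) (hs : 0 < s.re) {B : ℝ} (hB : 0 < B)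
    (htail : IntegrableOn (fun u : ℝ => (u : ℂ) ^ ((k : ℂ) - s - 1) * (φ u - a₀)) (Ioi B⁻¹)) :
    ∫ t in Ioc 0 B, (t : ℂ) ^ (s - 1) * (φ t - a₀)
      = -a₀ * ((B : ℂ) ^ s / s + I ^ k * (B : ℂ) ^ (s - k) / ((k : ℂ) - s))
        + I ^ k * ∫ u in Ioi B⁻¹, (u : ℂ) ^ ((k : ℂ) - s - 1) * (φ u - a₀) := by
  have hks : ((k : ℂ) - s).re < 0 := by simp only [sub_re, intCast_re]; linarith
  have hs' : (-s).re < 0 := by simp only [neg_re]; linarith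
  have hks_int : IntegrableOn (fun u : ℝ => I ^ k * (u : ℂ) ^ ((k : ℂ) - s - 1)) (Ioi B⁻¹) :=
    (integrableOn_Ioi_inv_cpow_sub_one hks hB).const_mul _
  have hs_int := integrableOn_Ioi_inv_cpow_sub_one hs' hB
  have hpolar : IntegrableOn
      (fun u : ℝ => a₀ * (I ^ k * (u : ℂ) ^ ((k : ℂ) - s - 1) - (u : ℂ) ^ (-s - 1))) (Ioi B⁻¹) :=
    (hks_int.sub hs_int).const_mul a₀
  rw [integral_Ioc_zero_eq_integral_Ioi_inv _ hB, setIntegral_congr_fun measurableSet_Ioi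
      fun u hu => inv_sq_smul_cpow_inv_mul_sub_eq hinv a₀ s ((inv_pos.2 hB).trans hu),
    integral_add (htail.const_mul _) hpolar,
    integral_const_mul, integral_const_mul, integral_sub hks_int hs_int,
    integral_const_mul, integral_Ioi_inv_cpow_sub_one hks hB,
    integral_Ioi_inv_cpow_sub_one hs' hB, neg_sub, neg_neg]
  ring

theorem stmt_9_general (k₁ k₂ k : ℤ) (g h f : ℂ → ℂ)
    (hg : IsModularForm k₁ g) (hh : IsModularForm k₂ h)
    (hk : k = k₁ - k₂)
    (hf : ∀ z : ℂ, f z = g z / h z)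
    (haxis : ∀ t : ℝ, 0 < t → h (t * I) ≠ 0)
    (T : ℝ) (c : ℕ → ℂ)
    (hcusp : ∀ τ : ℂ, T < τ.im → h τ ≠ 0 ∧
      Summable (fun n : ℕ => ‖c n * Complex.exp (2 * π * I * n * τ)‖) ∧
      f τ = ∑' n : ℕ, c n * Complex.exp (2 * π * I * n * τ)) :
    ∀ B : ℝ, 0 < B → ∀ s : ℂ, max (k : ℝ) 0 < s.re →
      IntegrableOn (fun t : ℝ => (t : ℂ) ^ (s - 1) * (f (t * I) - c 0)) (Set.Ioi 0) ∧
      IntegrableOn (fun t : ℝ => (t : ℂ) ^ (s - 1) * (f (t * I) - c 0)) (Set.Ioi B) ∧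
      IntegrableOn (fun t : ℝ =>
        (t : ℂ) ^ ((k : ℂ) - s - 1) * (f (t * I) - c 0)) (Set.Ioi (1 / B)) ∧
      ∫ t in Set.Ioi (0:ℝ), (t : ℂ) ^ (s - 1) * (f (t * I) - c 0)
        = -c 0 * ((B : ℂ) ^ s / s + I ^ k * (B : ℂ) ^ (s - (k : ℂ)) / ((k : ℂ) - s))
          + (∫ t in Set.Ioi B, (t : ℂ) ^ (s - 1) * (f (t * I) - c 0))
          + I ^ k * ∫ t in Set.Ioi (1 / B),
              (t : ℂ) ^ ((k : ℂ) - s - 1) * (f (t * I) - c 0) := by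
  intro B hB s hs
  obtain ⟨hsk, hs0⟩ := max_lt_iff.mp hs
  have hcont : ContinuousOn (fun t : ℝ => f (t * I)) (Ioi 0) := by
    simp only [hf]
    exact (continuousOn_comp_ofReal_mul_I hg.1.continuousOn).div
      (continuousOn_comp_ofReal_mul_I hh.1.continuousOn) haxis
  have hinv (t : ℝ) (ht : 0 < t) : f ((t⁻¹ : ℝ) * I) = ((t : ℂ) * I) ^ k * f (t * I) := by
    rw [← neg_inv_ofReal_mul_I, hf, hf, hk]
    exact div_neg_inv_eq_zpow_sub_mul hg.2.2.1 hh.2.2.1 (by simpa using ht)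
  obtain ⟨C, T₀, hdecay⟩ := exists_norm_sub_const_le_of_qExpansion fun τ hτ => (hcusp τ hτ).2
  have htail (r : ℂ) {b : ℝ} (hb : 0 < b) :=
    integrableOn_Ioi_cpow_mul_of_norm_le_exp (hcont.sub continuousOn_const) two_pi_pos hdecay r hb
  have hnear := integrableOn_Ioc_zero_cpow_mul_sub_of_inv hinv (c 0) hsk hs0 hB
    (htail _ (inv_pos.2 hB))
  rw [one_div, ← Ioc_union_Ioi_eq_Ioi hB.le, setIntegral_union (Ioc_disjoint_Ioi le_rfl)
    measurableSet_Ioi hnear (htail _ hB), integral_Ioc_zero_cpow_mul_sub_of_inv hinv (c 0) hsk hs0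
    hB (htail _ (inv_pos.2 hB))]
  exact ⟨hnear.union (htail _ hB), htail _ hB, htail _ (inv_pos.2 hB), by ring⟩

/-- splitting of the L-integral of a meromorphic modular form `f = g/h`
with no poles on the positive imaginary axis, regular at the cusp, at a reflection
point `B > 0`: the polar term plus two absolutely convergent integrals. -/
theorem stmt_9 (k₁ k₂ k : ℤ) (g h f : ℂ → ℂ)
    (hg : IsModularForm k₁ g) (hh : IsModularForm k₂ h)
    (hhne : ∃ z : ℂ, 0 < z.im ∧ h z ≠ 0)
    (hk : k = k₁ - k₂)
    (hf : ∀ z : ℂ, f z = g z / h z)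
    (haxis : ∀ t : ℝ, 0 < t → h (t * I) ≠ 0)
    (T : ℝ) (hT : 0 < T) (c : ℕ → ℂ)
    (hcusp : ∀ τ : ℂ, T < τ.im → h τ ≠ 0 ∧
      Summable (fun n : ℕ => ‖c n * Complex.exp (2 * π * I * n * τ)‖) ∧
      f τ = ∑' n : ℕ, c n * Complex.exp (2 * π * I * n * τ)) :
    ∀ B : ℝ, 0 < B → ∀ s : ℂ, max (k : ℝ) 0 < s.re →
      IntegrableOn (fun t : ℝ => (t : ℂ) ^ (s - 1) * (f (t * I) - c 0)) (Set.Ioi 0) ∧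
      IntegrableOn (fun t : ℝ => (t : ℂ) ^ (s - 1) * (f (t * I) - c 0)) (Set.Ioi B) ∧
      IntegrableOn (fun t : ℝ =>
        (t : ℂ) ^ ((k : ℂ) - s - 1) * (f (t * I) - c 0)) (Set.Ioi (1 / B)) ∧
      ∫ t in Set.Ioi (0:ℝ), (t : ℂ) ^ (s - 1) * (f (t * I) - c 0)
        = -c 0 * ((B : ℂ) ^ s / s + I ^ k * (B : ℂ) ^ (s - (k : ℂ)) / ((k : ℂ) - s))
          + (∫ t in Set.Ioi B, (t : ℂ) ^ (s - 1) * (f (t * I) - c 0))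
          + I ^ k * ∫ t in Set.Ioi (1 / B),
              (t : ℂ) ^ ((k : ℂ) - s - 1) * (f (t * I) - c 0) :=
  stmt_9_general k₁ k₂ k g h f hg hh hk hf haxis T c hcusp
end

section
/- Let g and h be level-one holomorphic modular forms of weights k₁ and k₂ with h not identically zero and k := k₁ − k₂ ≤ 0, and define F : ℂ → ℂ by F(τ) = g(τ)/h(τ) for Im τ > 0 and F(τ) = 0 otherwise. Suppose F is regular at the cusp: there exist T > 0 and c : ℕ → ℂ such that h(τ) ≠ 0 and F(τ) = Σ_{n≥0} c(n) e^{2πinτ} (absolutely convergent) for all τ with Im τ > T. Then for every natural number Δ satisfying 2Δ ≤ −k or Δ ≥ −k + 1, there exists t* > 0 such that F is complex-differentiable to all orders at it for 0 < t < t*, and as t → 0⁺ the quantity (2πi)^{−Δ} F^{(Δ)}(it) converges to c(0) if k = 0 and Δ = 0, and converges to 0 otherwise. -/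
/-! Near the cusp `0` the modular transformation gives `F z = z ^ (-k) * F (-z⁻¹)`, and `-z⁻¹`
runs off to `i∞`, where the `q`-expansion gives `F w = c 0 + O(e^{-2π Im w})`. On the disc of
radius `t / 2` about `t * I` one has `Im (-z⁻¹) ≥ 2 / (9 t)`, so there `F` differs from the
monomial `c 0 * z ^ (-k)` by `O(e^{-c/t})`, and Cauchy's estimate on that disc bounds the
`Δ`-th derivative of the difference at `t * I` by `O(t^{-Δ} e^{-c/t}) → 0`. The `Δ`-th
derivative of `c 0 * z ^ (-k)` at `t * I` tends to `0` unless `Δ = -k`, which the condition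
on `Δ` allows only for `k = Δ = 0`. -/

open Complex Real Filter Topology

open Metric Set
open scoped Nat

theorem norm_tsum_mul_pow_sub_le {c : ℕ → ℂ} {r : ℝ} (hr : 0 < r)
    (hs : Summable fun n => ‖c n‖ * r ^ n) {q : ℂ} (hq : ‖q‖ ≤ r) :
    ‖∑' n, c n * q ^ n - c 0‖ ≤ (∑' n, ‖c (n + 1)‖ * r ^ n) * ‖q‖ := by
  have hs' : Summable fun n => ‖c (n + 1)‖ * r ^ n :=
    (((summable_nat_add_iff 1).2 hs).div_const r).congr fun n => by
      rw [pow_succ]; field_simp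
  have hterm (n : ℕ) : ‖c (n + 1) * q ^ (n + 1)‖ ≤ ‖c (n + 1)‖ * r ^ n * ‖q‖ := by
    rw [norm_mul, norm_pow, pow_succ, ← mul_assoc]
    gcongr
  have htail : Summable fun n => ‖c (n + 1) * q ^ (n + 1)‖ :=
    (hs'.mul_right ‖q‖).of_nonneg_of_le (fun _ => norm_nonneg _) hterm
  have hsum : Summable fun n => c n * q ^ n :=
    (summable_nat_add_iff (f := fun n => c n * q ^ n) 1).1 htail.of_norm
  rw [hsum.tsum_eq_zero_add, pow_zero, mul_one, add_sub_cancel_left, ← tsum_mul_right]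
  exact (norm_tsum_le_tsum_norm htail).trans (htail.tsum_le_tsum hterm (hs'.mul_right _))

theorem norm_cexp_two_pi_I_mul (w : ℂ) :
    ‖cexp (2 * π * I * w)‖ = rexp (-(2 * π) * w.im) := by
  rw [Complex.norm_exp]
  congr 1
  simp

theorem cexp_two_pi_I_mul_natCast_mul (n : ℕ) (w : ℂ) :
    cexp (2 * π * I * n * w) = cexp (2 * π * I * w) ^ n := by
  rw [← Complex.exp_nat_mul]
  ring_nf

theorem exists_norm_tsum_cexp_sub_le {c : ℕ → ℂ} {y₀ : ℝ}
    (hs : Summable fun n : ℕ => ‖c n * cexp (2 * π * I * n * (y₀ * I))‖) :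
    ∃ K, ∀ w : ℂ, y₀ ≤ w.im →
      ‖∑' n : ℕ, c n * cexp (2 * π * I * n * w) - c 0‖ ≤
        K * rexp (-(2 * π) * w.im) := by
  set r := rexp (-(2 * π) * y₀)
  have hs' : Summable fun n => ‖c n‖ * r ^ n := hs.congr fun n => by
    rw [cexp_two_pi_I_mul_natCast_mul, norm_mul, norm_pow, norm_cexp_two_pi_I_mul]
    simp [r]
  refine ⟨∑' n, ‖c (n + 1)‖ * r ^ n, fun w hw => ?_⟩
  simp only [cexp_two_pi_I_mul_natCast_mul]
  rw [← norm_cexp_two_pi_I_mul]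
  refine norm_tsum_mul_pow_sub_le (exp_pos _) hs' ?_
  rw [norm_cexp_two_pi_I_mul, Real.exp_le_exp]
  nlinarith [two_pi_pos]

section BallGeometry

variable {t : ℝ} {z : ℂ}

theorem half_le_im_of_mem_closedBall_mul_I (hz : z ∈ closedBall ((t : ℂ) * I) (t / 2)) :
    t / 2 ≤ z.im := by
  have := (abs_im_le_norm (z - t * I)).trans (mem_closedBall_iff_norm.1 hz)
  simp only [sub_im, mul_im, ofReal_re, I_im, ofReal_im, I_re, mul_one, mul_zero,
    add_zero] at this
  linarith [(abs_le.1 this).1]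

theorem norm_le_of_mem_closedBall_mul_I (ht : 0 ≤ t)
    (hz : z ∈ closedBall ((t : ℂ) * I) (t / 2)) : ‖z‖ ≤ 3 * t / 2 := by
  have := norm_le_of_mem_closedBall hz
  rw [norm_mul, norm_I, mul_one, norm_real, Real.norm_of_nonneg ht] at this
  linarith

theorem le_im_neg_inv_of_mem_closedBall_mul_I (ht : 0 < t)
    (hz : z ∈ closedBall ((t : ℂ) * I) (t / 2)) : 2 / (9 * t) ≤ (-z⁻¹).im := by
  have him := half_le_im_of_mem_closedBall_mul_I hz
  have hnorm := norm_le_of_mem_closedBall_mul_I ht.le hz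
  have hz0 : 0 < normSq z := normSq_pos.2 fun h => by simp [h] at him; linarith
  rw [neg_im, inv_im, neg_div, neg_neg, le_div_iff₀ hz0, ← Complex.sq_norm]
  calc 2 / (9 * t) * ‖z‖ ^ 2 ≤ 2 / (9 * t) * (3 * t / 2) ^ 2 := by gcongr
    _ = t / 2 := by field_simp; ring
    _ ≤ z.im := him

theorem closedBall_mul_I_subset {y₀ : ℝ} (ht : 0 < t) (hy : y₀ < 2 / (9 * t)) :
    closedBall ((t : ℂ) * I) (t / 2) ⊆ {z | 0 < z.im ∧ y₀ < (-z⁻¹).im} := fun _ hz =>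
  ⟨(half_pos ht).trans_le (half_le_im_of_mem_closedBall_mul_I hz),
    hy.trans_le (le_im_neg_inv_of_mem_closedBall_mul_I ht hz)⟩

end BallGeometry

theorem tendsto_iteratedDeriv_mul_I_of_norm_le_exp {R : ℂ → ℂ} {C b : ℝ} (hb : 0 < b)
    (hd : ∀ᶠ t : ℝ in 𝓝[>] 0, DifferentiableOn ℂ R (closedBall ((t : ℂ) * I) (t / 2)))
    (hR : ∀ᶠ t : ℝ in 𝓝[>] 0, ∀ z ∈ sphere ((t : ℂ) * I) (t / 2),
      ‖R z‖ ≤ C * rexp (-b / t)) (n : ℕ) :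
    Tendsto (fun t : ℝ => iteratedDeriv n R (t * I)) (𝓝[>] 0) (𝓝 0) := by
  have hbound : ∀ᶠ t : ℝ in 𝓝[>] 0,
      ‖iteratedDeriv n R (t * I)‖ ≤
        n ! * C * 2 ^ n * (t⁻¹ ^ (n : ℝ) * rexp (-b * t⁻¹)) := by
    filter_upwards [hd, hR, self_mem_nhdsWithin] with t hdt hRt (ht : 0 < t)
    have hr : 0 < t / 2 := half_pos ht
    refine (norm_iteratedDeriv_le_of_forall_mem_sphere_norm_le n hr
      (DifferentiableOn.diffContOnCl (by rwa [closure_ball _ hr.ne'])) hRt).trans_eq ?_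
    rw [Real.rpow_natCast, div_pow, inv_pow, ← div_eq_mul_inv (-b)]
    field_simp
  have hlim :
      Tendsto (fun t : ℝ => t⁻¹ ^ (n : ℝ) * rexp (-b * t⁻¹)) (𝓝[>] 0) (𝓝 0) :=
    (tendsto_rpow_mul_exp_neg_mul_atTop_nhds_zero n b hb).comp tendsto_inv_nhdsGT_zero
  exact squeeze_zero_norm' hbound (by simpa using hlim.const_mul (n ! * C * 2 ^ n))

theorem tendsto_iteratedDeriv_const_mul_pow_mul_I (c₀ : ℂ) (m n : ℕ) :
    Tendsto (fun t : ℝ => iteratedDeriv n (fun z => c₀ * z ^ m) (t * I)) (𝓝[>] 0)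
      (𝓝 (c₀ * if n = m then (m ! : ℂ) else 0)) := by
  have hcont : Continuous fun t : ℝ => c₀ * iteratedDeriv n (· ^ m) ((t : ℂ) * I) := by
    simp only [iteratedDeriv_pow]
    fun_prop
  have := (hcont.tendsto 0).mono_left (nhdsWithin_le_nhds (s := Ioi 0))
  rw [ofReal_zero, zero_mul, iteratedDeriv_fun_pow_zero] at this
  simpa only [iteratedDeriv_const_mul_field, Nat.cast_ite, Nat.cast_zero] using this

theorem tendsto_iteratedDeriv_mul_I_of_eq_pow_mul_comp_neg_inv {F G : ℂ → ℂ} {c₀ : ℂ}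
    {m : ℕ} {y₀ K a : ℝ} (ha : 0 < a)
    (hd : DifferentiableOn ℂ F {z | 0 < z.im ∧ y₀ < (-z⁻¹).im})
    (hFG : ∀ z : ℂ, 0 < z.im → y₀ < (-z⁻¹).im → F z = z ^ m * G (-z⁻¹))
    (hG : ∀ w : ℂ, y₀ ≤ w.im → ‖G w - c₀‖ ≤ K * rexp (-a * w.im)) (n : ℕ) :
    Tendsto (fun t : ℝ => iteratedDeriv n F (t * I)) (𝓝[>] 0)
      (𝓝 (c₀ * if n = m then (m ! : ℂ) else 0)) := by
  set P : ℂ → ℂ := fun z => c₀ * z ^ m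
  have hP : Differentiable ℂ P := by fun_prop
  have hK : 0 ≤ K := nonneg_of_mul_nonneg_left
    ((norm_nonneg _).trans (hG (y₀ * I) (by simp))) (exp_pos _)
  have hsmall : ∀ᶠ t : ℝ in 𝓝[>] 0, 0 < t ∧ t ≤ 1 ∧ y₀ < 2 / (9 * t) := by
    have hinv : Tendsto (fun t : ℝ => 2 / 9 * t⁻¹) (𝓝[>] 0) atTop :=
      tendsto_inv_nhdsGT_zero.const_mul_atTop (by norm_num)
    filter_upwards [self_mem_nhdsWithin, Ioc_mem_nhdsGT one_pos, hinv.eventually_gt_atTop y₀]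
      with t ht ht1 hy
    exact ⟨ht, ht1.2, by rwa [div_mul_eq_div_div, div_eq_mul_inv]⟩
  have hrem : Tendsto (fun t : ℝ => iteratedDeriv n (F - P) (t * I)) (𝓝[>] 0) (𝓝 0) := by
    refine tendsto_iteratedDeriv_mul_I_of_norm_le_exp (C := (3 / 2) ^ m * K) (b := 2 * a / 9)
      (by positivity) ?_ ?_ n
    · filter_upwards [hsmall] with t ⟨ht, _, hy⟩
      exact (hd.sub hP.differentiableOn).mono (closedBall_mul_I_subset ht hy)
    · filter_upwards [hsmall] with t ⟨ht, ht1, hy⟩ z hz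
      have hzb := sphere_subset_closedBall hz
      obtain ⟨him, hy'⟩ := closedBall_mul_I_subset ht hy hzb
      have hGz := hG _ hy'.le
      have hz : ‖z‖ ≤ 3 / 2 := (norm_le_of_mem_closedBall_mul_I ht.le hzb).trans (by linarith)
      have hexp : -a * (-z⁻¹).im ≤ -(2 * a / 9) / t := by
        have := mul_le_mul_of_nonneg_left (le_im_neg_inv_of_mem_closedBall_mul_I ht hzb) ha.le
        linarith [show -(2 * a / 9) / t = -(a * (2 / (9 * t))) by ring]
      calc ‖(F - P) z‖ = ‖z‖ ^ m * ‖G (-z⁻¹) - c₀‖ := by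
            simp only [Pi.sub_apply, P, hFG z him hy']
            rw [mul_comm c₀, ← mul_sub, norm_mul, norm_pow]
        _ ≤ (3 / 2) ^ m * (K * rexp (-a * (-z⁻¹).im)) := by gcongr
        _ ≤ (3 / 2) ^ m * K * rexp (-(2 * a / 9) / t) := by rw [← mul_assoc]; gcongr
  have hsplit : ∀ᶠ t : ℝ in 𝓝[>] 0,
      iteratedDeriv n P (t * I) + iteratedDeriv n (F - P) (t * I) =
        iteratedDeriv n F (t * I) := by
    filter_upwards [hsmall] with t ⟨ht, _, hy⟩
    have hF : ContDiffAt ℂ n F (t * I) := (hd.analyticAt (mem_of_superset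
      (closedBall_mem_nhds _ (half_pos ht)) (closedBall_mul_I_subset ht hy))).contDiffAt
    rw [iteratedDeriv_sub hF (hP.analyticAt _).contDiffAt, add_sub_cancel]
  simpa using ((tendsto_iteratedDeriv_const_mul_pow_mul_I c₀ m n).add hrem).congr' hsplit

section ModularForm

variable {k₁ k₂ : ℤ} {g h : ℂ → ℂ} {z : ℂ}

theorem IsModularForm.div_eq_pow_mul_div_apply_neg_inv (hg : IsModularForm k₁ g)
    (hh : IsModularForm k₂ h) {m : ℕ} (hm : (m : ℤ) = k₂ - k₁) (hz : 0 < z.im) :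
    g z / h z = z ^ m * (g (-z⁻¹) / h (-z⁻¹)) := by
  have hz0 : z ≠ 0 := fun h0 => by simp [h0] at hz
  rw [hg.2.2.1 z hz, hh.2.2.1 z hz, ← zpow_natCast, hm, zpow_sub₀ hz0]
  field_simp

theorem IsModularForm.analyticOnNhd_of_eq_div (hg : IsModularForm k₁ g)
    (hh : IsModularForm k₂ h) {F : ℂ → ℂ} (hF : ∀ z : ℂ, 0 < z.im → F z = g z / h z) :
    AnalyticOnNhd ℂ F {z | 0 < z.im ∧ h z ≠ 0} := by
  refine DifferentiableOn.analyticOnNhd ?_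
    (hh.1.continuousOn.isOpen_inter_preimage (isOpen_lt continuous_const continuous_im) isOpen_ne)
  exact ((hg.1.mono fun z hz => hz.1).div (hh.1.mono fun z hz => hz.1) fun z hz => hz.2).congr
    fun z hz => hF z hz.1

theorem IsModularForm.apply_ne_zero_of_apply_neg_inv_ne_zero (hh : IsModularForm k₂ h)
    (hz : 0 < z.im) (hne : h (-z⁻¹) ≠ 0) : h z ≠ 0 := fun h0 =>
  hne (by rw [hh.2.2.1 z hz, h0, mul_zero])

end ModularForm

theorem stmt_12_general (k₁ k₂ k : ℤ) (g h : ℂ → ℂ)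
    (hg : IsModularForm k₁ g) (hh : IsModularForm k₂ h)
    (hk : k = k₁ - k₂) (hknp : k ≤ 0)
    (F : ℂ → ℂ) (hF : ∀ τ : ℂ, F τ = if 0 < τ.im then g τ / h τ else 0)
    (T : ℝ) (hT : 0 < T) (c : ℕ → ℂ)
    (hcusp : ∀ τ : ℂ, T < τ.im → h τ ≠ 0 ∧
      Summable (fun n : ℕ => ‖c n * Complex.exp (2 * π * I * n * τ)‖) ∧
      F τ = ∑' n : ℕ, c n * Complex.exp (2 * π * I * n * τ))
    (Δ : ℕ) (hΔ : 2 * (Δ : ℤ) ≤ -k ∨ -k + 1 ≤ (Δ : ℤ)) :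
    ∃ tstar : ℝ, 0 < tstar ∧
      (∀ t : ℝ, 0 < t → t < tstar →
        ∀ n : ℕ, DifferentiableAt ℂ (iteratedDeriv n F) ((t : ℂ) * I)) ∧
      Tendsto (fun t : ℝ => ((2 * π * I : ℂ) ^ Δ)⁻¹ * iteratedDeriv Δ F ((t : ℂ) * I))
        (nhdsWithin 0 (Set.Ioi 0))
        (nhds (if k = 0 ∧ Δ = 0 then c 0 else 0)) := by
  obtain ⟨m, hm⟩ : ∃ m : ℕ, (m : ℤ) = -k :=
    ⟨(-k).toNat, Int.toNat_of_nonneg (by omega)⟩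
  set V := {z : ℂ | 0 < z.im ∧ h z ≠ 0}
  have hFV : AnalyticOnNhd ℂ F V :=
    hg.analyticOnNhd_of_eq_div hh fun z hz => by rw [hF, if_pos hz]
  have hmemV {z : ℂ} (hz : 0 < z.im) (hzT : T < (-z⁻¹).im) : z ∈ V :=
    ⟨hz, hh.apply_ne_zero_of_apply_neg_inv_ne_zero hz (hcusp _ hzT).1⟩
  have hFG (z : ℂ) (hz : 0 < z.im) (hzT : T < (-z⁻¹).im) :
      F z = z ^ m * ∑' n : ℕ, c n * cexp (2 * π * I * n * (-z⁻¹)) := by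
    rw [← (hcusp _ hzT).2.2, hF z, hF (-z⁻¹), if_pos hz, if_pos (hT.trans hzT)]
    exact hg.div_eq_pow_mul_div_apply_neg_inv hh (by omega) hz
  obtain ⟨K, hK⟩ := exists_norm_tsum_cexp_sub_le (hcusp ((T + 1 : ℝ) * I) (by simp)).2.1
  refine ⟨T⁻¹, inv_pos.2 hT, fun t ht htT n => ?_, ?_⟩
  · have hmem : (t : ℂ) * I ∈ V :=
      hmemV (by simpa using ht) (by simpa using (lt_inv_comm₀ ht hT).1 htT)
    simpa only [iteratedDeriv_eq_iterate] using (hFV.iterated_deriv n _ hmem).differentiableAt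
  · have hlim := tendsto_iteratedDeriv_mul_I_of_eq_pow_mul_comp_neg_inv two_pi_pos
      (hFV.differentiableOn.mono fun z hz => hmemV hz.1 (by linarith [hz.2]))
      (fun z hz hzT => hFG z hz (by linarith)) hK Δ
    have hvalue : ((2 * π * I : ℂ) ^ Δ)⁻¹ * (c 0 * if Δ = m then (m ! : ℂ) else 0)
        = if k = 0 ∧ Δ = 0 then c 0 else 0 := by
      by_cases hΔm : Δ = m
      · obtain rfl : Δ = 0 := by omega
        obtain rfl : k = 0 := by omega
        simp [← hΔm]
      · rw [if_neg hΔm, if_neg (by omega), mul_zero, mul_zero]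
    simpa only [hvalue] using hlim.const_mul ((2 * π * I : ℂ) ^ Δ)⁻¹

/-- if `F = g/h` has nonpositive weight `k = k₁ - k₂ ≤ 0` and is
regular at the cusp, then for `Δ` with `2Δ ≤ -k` or `Δ ≥ -k + 1`, the quantity
`(2πi)^{-Δ} F^{(Δ)}(it)` tends, as `t → 0⁺`, to `c(0)` when `k = 0` and `Δ = 0`,
and to `0` otherwise. -/
theorem stmt_12 (k₁ k₂ k : ℤ) (g h : ℂ → ℂ)
    (hg : IsModularForm k₁ g) (hh : IsModularForm k₂ h)
    (hhne : ∃ z : ℂ, 0 < z.im ∧ h z ≠ 0)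
    (hk : k = k₁ - k₂) (hknp : k ≤ 0)
    (F : ℂ → ℂ) (hF : ∀ τ : ℂ, F τ = if 0 < τ.im then g τ / h τ else 0)
    (T : ℝ) (hT : 0 < T) (c : ℕ → ℂ)
    (hcusp : ∀ τ : ℂ, T < τ.im → h τ ≠ 0 ∧
      Summable (fun n : ℕ => ‖c n * Complex.exp (2 * π * I * n * τ)‖) ∧
      F τ = ∑' n : ℕ, c n * Complex.exp (2 * π * I * n * τ))
    (Δ : ℕ) (hΔ : 2 * (Δ : ℤ) ≤ -k ∨ -k + 1 ≤ (Δ : ℤ)) :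
    ∃ tstar : ℝ, 0 < tstar ∧
      (∀ t : ℝ, 0 < t → t < tstar →
        ∀ n : ℕ, DifferentiableAt ℂ (iteratedDeriv n F) ((t : ℂ) * I)) ∧
      Tendsto (fun t : ℝ => ((2 * π * I : ℂ) ^ Δ)⁻¹ * iteratedDeriv Δ F ((t : ℂ) * I))
        (nhdsWithin 0 (Set.Ioi 0))
        (nhds (if k = 0 ∧ Δ = 0 then c 0 else 0)) :=
  stmt_12_general k₁ k₂ k g h hg hh hk hknp F hF T hT c hcusp Δ hΔ
end

section
/- For every s ∈ ℂ with Re(s) > 2, the series Σ_{n≥1} σ₁(n) e^{−2πnt} converges absolutely for each t > 0, the integral ∫₀^∞ t^{s−1} (Σ_{n≥1} σ₁(n) e^{−2πnt}) dt converges absolutely, and ∫₀^∞ t^{s−1} (Σ_{n≥1} σ₁(n) e^{−2πnt}) dt = (2π)^{−s} Γ(s) ζ(s) ζ(s−1). -/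
/-!
Each term of the series has Mellin transform `∫₀^∞ t^(s-1) e^(-2πnt) dt = Γ(s) (2πn)^(-s)`, so
termwise integration gives `(2π)^(-s) Γ(s) Σ σ₁(n) n^(-s)`, and this Dirichlet series is
`ζ(s) ζ(s-1)` because `σ₁ = 1 ⍟ id`. Termwise integration is legitimate since the integrals of
the absolute values of the terms add up to `Γ(Re s) (2π)^(-Re s) Σ σ₁(n) n^(-Re s) < ∞`.
-/

open Complex Real Filter Topology MeasureTheory Set

open scoped ArithmeticFunction.sigma

theorem MeasureTheory.integrable_tsum_of_summable_integral_norm {α E ι : Type*}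
    [MeasurableSpace α] {μ : Measure α} [NormedAddCommGroup E] [CompleteSpace E] [Countable ι]
    {F : ι → α → E} (hF_int : ∀ i, Integrable (F i) μ)
    (hF_sum : Summable fun i ↦ ∫ a, ‖F i a‖ ∂μ) :
    Integrable (fun a ↦ ∑' i, F i a) μ := by
  have h_meas i : AEMeasurable (fun a ↦ ‖F i a‖ₑ) μ := (hF_int i).1.enorm
  have h_lint : ∫⁻ a, ∑' i, ‖F i a‖ₑ ∂μ ≠ ⊤ := by
    rw [lintegral_tsum h_meas]
    simp_rw [← ofReal_integral_norm_eq_lintegral_enorm (hF_int _)]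
    rw [← ENNReal.ofReal_tsum_of_nonneg (fun i ↦ integral_nonneg fun a ↦ norm_nonneg _) hF_sum]
    exact ENNReal.ofReal_ne_top
  have h_ae : ∀ᵐ a ∂μ, Summable fun i ↦ ‖F i a‖ := by
    filter_upwards [ae_lt_top' (AEMeasurable.tsum h_meas) h_lint] with a ha
    exact tsum_enorm_ne_top_iff_summable_norm.1 ha.ne
  refine ⟨aestronglyMeasurable_of_tendsto_ae (u := atTop)
    (f := fun (S : Finset ι) a ↦ ∑ i ∈ S, F i a)
    (fun S ↦ Finset.aestronglyMeasurable_fun_sum _ fun i _ ↦ (hF_int i).1) ?_, ?_⟩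
  · filter_upwards [h_ae] with a ha using ha.of_norm.hasSum
  · exact (lintegral_mono fun a ↦ enorm_tsum_le_tsum_enorm).trans_lt h_lint.lt_top

lemma mellinConvergent_exp_neg_mul {p : ℝ} (hp : 0 < p) {s : ℂ} (hs : 0 < s.re) :
    MellinConvergent (fun t : ℝ ↦ (rexp (-p * t) : ℂ)) s := by
  have h : MellinConvergent (fun t : ℝ ↦ (rexp (-t) : ℂ)) s := by
    simpa only [MellinConvergent, smul_eq_mul, mul_comm] using Complex.GammaIntegral_convergent hs
  simpa only [neg_mul] using (MellinConvergent.comp_mul_left hp).mpr h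

lemma integral_norm_cpow_mul_exp_neg_mul {p : ℝ} (hp : 0 < p) {s : ℂ} (hs : 0 < s.re) (a : ℂ) :
    ∫ t in Ioi (0 : ℝ), ‖(t : ℂ) ^ (s - 1) * (a * rexp (-p * t))‖
      = Real.Gamma s.re * (‖a‖ / p ^ s.re) := by
  have h := Real.integral_rpow_mul_exp_neg_mul_Ioi hs hp
  rw [one_div, inv_rpow hp.le, ← div_eq_inv_mul] at h
  rw [mul_div_assoc', mul_comm _ ‖a‖, mul_div_assoc, ← h, ← integral_const_mul]
  refine setIntegral_congr_fun measurableSet_Ioi fun t ht ↦ ?_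
  rw [norm_mul, norm_mul, norm_real, Real.norm_of_nonneg (exp_pos _).le,
    norm_cpow_eq_rpow_re_of_pos ht, sub_re, one_re, neg_mul]
  ring

lemma mellinConvergent_of_hasSum {ι : Type*} [Countable ι] {a : ι → ℂ} {p : ι → ℝ} {F : ℝ → ℂ}
    {s : ℂ} (hp : ∀ i, 0 < p i) (hs : 0 < s.re)
    (hF : ∀ t ∈ Ioi 0, HasSum (fun i ↦ a i * rexp (-p i * t)) (F t))
    (h_sum : Summable fun i ↦ ‖a i‖ / p i ^ s.re) :
    MellinConvergent F s := by
  have h_int : IntegrableOn (fun t : ℝ ↦ ∑' i, (t : ℂ) ^ (s - 1) * (a i * rexp (-p i * t)))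
      (Ioi 0) := by
    refine integrable_tsum_of_summable_integral_norm
      (fun i ↦ (mellinConvergent_exp_neg_mul (hp i) hs).const_smul (a i)) ?_
    simp_rw [integral_norm_cpow_mul_exp_neg_mul (hp _) hs]
    exact h_sum.mul_left _
  refine h_int.congr_fun (fun t ht ↦ ?_) measurableSet_Ioi
  simp only [tsum_mul_left, (hF t ht).tsum_eq, smul_eq_mul]

section LSeries

variable {f : ℕ → ℂ} {c : ℝ} {F : ℝ → ℂ} {s : ℂ}

lemma summable_norm_div_mul_natCast_add_one_rpow (hc : 0 < c) (hf : LSeriesSummable f s) :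
    Summable fun n : ℕ ↦ ‖f (n + 1)‖ / (c * (n + 1)) ^ s.re := by
  have h := ((summable_nat_add_iff 1).mpr (summable_norm_iff.mpr hf)).mul_left (c ^ s.re)⁻¹
  refine h.congr fun n ↦ ?_
  rw [LSeries.norm_term_eq, if_neg n.succ_ne_zero, mul_rpow hc.le (by positivity)]
  push_cast
  ring

lemma mellinConvergent_of_LSeriesSummable (hc : 0 < c) (hs : 0 < s.re)
    (hF : ∀ t ∈ Ioi 0, HasSum (fun n : ℕ ↦ f (n + 1) * rexp (-(c * (n + 1)) * t)) (F t))
    (hf : LSeriesSummable f s) :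
    MellinConvergent F s :=
  mellinConvergent_of_hasSum (fun n ↦ by positivity) hs hF
    (summable_norm_div_mul_natCast_add_one_rpow hc hf)

lemma mellin_eq_of_LSeriesHasSum {L : ℂ} (hc : 0 < c) (hs : 0 < s.re)
    (hF : ∀ t ∈ Ioi 0, HasSum (fun n : ℕ ↦ f (n + 1) * rexp (-(c * (n + 1)) * t)) (F t))
    (hf : LSeriesHasSum f s L) :
    mellin F s = (c : ℂ) ^ (-s) * Gamma s * L := by
  have h_mellin := hasSum_mellin (fun n ↦ Or.inr (by positivity)) hs hF
    (summable_norm_div_mul_natCast_add_one_rpow hc hf.LSeriesSummable)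
  have h_shift : HasSum (fun n : ℕ ↦ LSeries.term f s (n + 1)) L := by
    simpa using (hasSum_nat_add_iff' 1).mpr hf
  have h_pow (n : ℕ) : (((c * (n + 1) : ℝ)) : ℂ) ^ s = (c : ℂ) ^ s * ((n + 1 : ℕ) : ℂ) ^ s := by
    rw [ofReal_mul, mul_cpow_ofReal_nonneg hc.le (by positivity)]
    push_cast
    rfl
  refine h_mellin.unique ((h_shift.mul_left ((c : ℂ) ^ (-s) * Gamma s)).congr_fun fun n ↦ ?_)
  rw [LSeries.term_of_ne_zero n.succ_ne_zero, h_pow, cpow_neg]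
  ring

end LSeries

lemma LSeriesHasSum_natCast {s : ℂ} (hs : 2 < s.re) :
    LSeriesHasSum (fun n : ℕ ↦ (n : ℂ)) s (riemannZeta (s - 1)) := by
  have hs' : 1 < (s - 1).re := by simp only [sub_re, one_re]; linarith
  refine (LSeriesHasSum_one hs').congr_fun fun n ↦ ?_
  rcases eq_or_ne n 0 with rfl | hn
  · simp
  have hn' : (n : ℂ) ≠ 0 := Nat.cast_ne_zero.mpr hn
  rw [LSeries.term_of_ne_zero hn, LSeries.term_of_ne_zero hn, Pi.one_apply, cpow_sub _ _ hn',
    cpow_one, one_div_div]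

lemma LSeriesHasSum_sigma_one {s : ℂ} (hs : 2 < s.re) :
    LSeriesHasSum (fun n ↦ (σ 1 n : ℂ)) s (riemannZeta s * riemannZeta (s - 1)) := by
  convert (LSeriesHasSum_one (by linarith)).convolution (LSeriesHasSum_natCast hs) using 1
  ext n
  simp only [LSeries.convolution_def, Nat.sum_divisorsAntidiagonal' (fun a b ↦ (1 : ℕ → ℂ) a * b),
    ArithmeticFunction.sigma_one_apply]
  simp

lemma summable_sigma_mul_exp_neg_mul (k : ℕ) {c : ℝ} (hc : 0 < c) :
    Summable fun n : ℕ ↦ (σ k n : ℝ) * rexp (-c * n) := by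
  refine (summable_pow_mul_exp_neg_nat_mul (k + 1) hc).of_nonneg_of_le (fun n ↦ by positivity)
    fun n ↦ ?_
  gcongr
  exact_mod_cast ArithmeticFunction.sigma_le_pow_succ k n

/-- the Mellin transform of the Lambert-type series
`Σ_{n≥1} σ₁(n) e^{-2πnt}` equals `(2π)^{-s} Γ(s) ζ(s) ζ(s-1)` for `Re s > 2`,
with the series and the integral converging absolutely. -/
theorem stmt_16 (s : ℂ) (hs : 2 < s.re) :
    (∀ t : ℝ, 0 < t → Summable (fun n : ℕ =>
      ‖((∑ dd ∈ (n + 1).divisors, dd : ℕ) : ℂ) *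
        Complex.exp (-(2 * π * ((n : ℝ) + 1) * t))‖)) ∧
    MeasureTheory.IntegrableOn (fun t : ℝ =>
      (t : ℂ) ^ (s - 1) * ∑' n : ℕ, ((∑ dd ∈ (n + 1).divisors, dd : ℕ) : ℂ) *
        Complex.exp (-(2 * π * ((n : ℝ) + 1) * t))) (Set.Ioi 0) ∧
    ∫ t in Set.Ioi (0 : ℝ),
        (t : ℂ) ^ (s - 1) * ∑' n : ℕ, ((∑ dd ∈ (n + 1).divisors, dd : ℕ) : ℂ) *
          Complex.exp (-(2 * π * ((n : ℝ) + 1) * t))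
      = (2 * π : ℂ) ^ (-s) * Complex.Gamma s * riemannZeta s * riemannZeta (s - 1) := by
  have hterm (n : ℕ) (t : ℝ) : ((∑ dd ∈ (n + 1).divisors, dd : ℕ) : ℂ) *
      Complex.exp (-(2 * π * ((n : ℝ) + 1) * t))
        = (σ 1 (n + 1) : ℂ) * rexp (-(2 * π * (n + 1)) * t) := by
    rw [ArithmeticFunction.sigma_one_apply]
    push_cast
    ring_nf
  have h_summable (t : ℝ) (ht : 0 < t) : Summable fun n : ℕ ↦
      ‖((∑ dd ∈ (n + 1).divisors, dd : ℕ) : ℂ) * Complex.exp (-(2 * π * ((n : ℝ) + 1) * t))‖ := by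
    refine ((summable_nat_add_iff 1).mpr
      (summable_sigma_mul_exp_neg_mul 1 (by positivity : 0 < 2 * π * t))).congr fun n ↦ ?_
    rw [hterm, norm_mul, norm_real, Real.norm_of_nonneg (exp_pos _).le, Complex.norm_natCast]
    push_cast
    ring_nf
  have hF (t : ℝ) (ht : t ∈ Ioi 0) : HasSum
      (fun n : ℕ ↦ (σ 1 (n + 1) : ℂ) * rexp (-(2 * π * (n + 1)) * t))
      (∑' n : ℕ, ((∑ dd ∈ (n + 1).divisors, dd : ℕ) : ℂ) *
        Complex.exp (-(2 * π * ((n : ℝ) + 1) * t))) := by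
    simpa only [hterm] using (h_summable t ht).of_norm.hasSum
  have hs0 : 0 < s.re := by linarith
  have hL := LSeriesHasSum_sigma_one hs
  refine ⟨h_summable, ?_, ?_⟩
  · simpa only [MellinConvergent, smul_eq_mul] using
      mellinConvergent_of_LSeriesSummable (f := fun n ↦ (σ 1 n : ℂ)) two_pi_pos hs0 hF
        hL.LSeriesSummable
  · have h_mellin := mellin_eq_of_LSeriesHasSum (f := fun n ↦ (σ 1 n : ℂ)) two_pi_pos hs0 hF hL
    simp only [mellin, smul_eq_mul] at h_mellin
    rw [h_mellin]
    push_cast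
    ring
end
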